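/- Let f : ℂ^n → ℂ^n be a polynomial map whose components P₁,…,Pₙ are homogeneous polynomials of positive degree, and suppose f⁻¹(0) = {0}. Then the ring map ℂ[Y₁,…,Yₙ] → ℂ[X₁,…,Xₙ] sending Yᵢ to Pᵢ makes ℂ[X₁,…,Xₙ] into a finitely generated module over the subring ℂ[P₁,…,Pₙ]. -/

import Mathlib

/-!
By the Nullstellensatz some power `X i ^ K` of every variable lies in the ideal `(P₁, …, Pₙ)`,
and since that ideal is homogeneous we may write `X i ^ K = ∑ gⱼ Pⱼ` with `gⱼ` homogeneous of
degree `K - dⱼ`. Then the monomials all of whose exponents are `< K` generate `ℂ[X]` over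
`ℂ[P]`: a monomial with some exponent `≥ K` is `∑ Pⱼ (X^e' gⱼ)`, and `X^e' gⱼ` has smaller
degree because `dⱼ ≥ 1`, so induction on the degree applies.
-/

open MvPolynomial

theorem DirectSum.exists_homogeneous_sum_mul_of_mem_span_range {A ι σ : Type*} [CommSemiring A]
    [SetLike σ A] [AddSubmonoidClass σ A] (𝒜 : ℕ → σ) [GradedRing 𝒜] [Fintype ι]
    {P : ι → A} {d : ι → ℕ} (hP : ∀ j, P j ∈ 𝒜 (d j)) {f : A} {D : ℕ} (hf : f ∈ 𝒜 D)
    (hmem : f ∈ Ideal.span (Set.range P)) :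
    ∃ g : ι → A, (∀ j, g j ∈ 𝒜 (D - d j)) ∧ f = ∑ j, g j * P j := by
  classical
  obtain ⟨c, rfl⟩ := Ideal.mem_span_range_iff_exists_fun.mp hmem
  refine ⟨fun j => if d j ≤ D then decompose 𝒜 (c j) (D - d j) else 0, fun j => ?_, ?_⟩
  · dsimp only
    split_ifs
    exacts [SetLike.coe_mem _, zero_mem _]
  · rw [← decompose_of_mem_same 𝒜 hf, decompose_sum, DFinsupp.finsetSum_apply,
      AddSubmonoidClass.coe_finsetSum]
    refine Finset.sum_congr rfl fun j _ => ?_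
    rw [coe_decompose_mul_of_right_mem 𝒜 D (hP j), ite_mul, zero_mul]

namespace MvPolynomial

theorem X_mem_radical_span_of_forall_eval_eq_zero {k σ ι : Type*} [Field k] [IsAlgClosed k]
    [Finite σ] (P : ι → MvPolynomial σ k)
    (hz : ∀ a : σ → k, (∀ j, eval a (P j) = 0) → a = 0) (i : σ) :
    X i ∈ (Ideal.span (Set.range P)).radical := by
  rw [← vanishingIdeal_zeroLocus_eq_radical (K := k), mem_vanishingIdeal_iff]
  intro a ha
  have ha0 : a = 0 := hz a fun j => ha _ (Ideal.subset_span ⟨j, rfl⟩)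
  simp [ha0]

theorem exists_X_pow_mem_span_of_forall_eval_eq_zero {k σ ι : Type*} [Field k] [IsAlgClosed k]
    [Finite σ] (P : ι → MvPolynomial σ k)
    (hz : ∀ a : σ → k, (∀ j, eval a (P j) = 0) → a = 0) :
    ∃ K, ∀ i, (X i : MvPolynomial σ k) ^ K ∈ Ideal.span (Set.range P) := by
  obtain ⟨K, hK⟩ := Ideal.exists_pow_le_of_le_radical_of_fg
    (Ideal.span_le.mpr <| Set.range_subset_iff.mpr
      (X_mem_radical_span_of_forall_eval_eq_zero P hz))
    (Submodule.fg_span (Set.finite_range (X : σ → MvPolynomial σ k)))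
  exact ⟨K, fun i => hK (Ideal.pow_mem_pow (Ideal.subset_span (Set.mem_range_self i)) K)⟩

variable {R σ : Type*} [CommSemiring R]

theorem mem_of_forall_monomial_one_mem {A : Type*} [Semiring A] [Algebra R A]
    [Module A (MvPolynomial σ R)] [IsScalarTower R A (MvPolynomial σ R)]
    {M : Submodule A (MvPolynomial σ R)} {p : MvPolynomial σ R}
    (hp : ∀ e ∈ p.support, monomial e 1 ∈ M) : p ∈ M := by
  rw [p.as_sum]
  refine Submodule.sum_mem _ fun e he => ?_
  rw [← mul_one (coeff e p), ← smul_eq_mul, ← smul_monomial]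
  exact Submodule.smul_of_tower_mem _ _ (hp e he)

attribute [local instance] gradedAlgebra

variable {ι : Type*} [Fintype ι] {P : ι → MvPolynomial σ R} {d : ι → ℕ}

theorem monomial_one_mem_span_adjoin_of_X_pow_mem (hd : ∀ j, 1 ≤ d j)
    (hP : ∀ j, (P j).IsHomogeneous (d j)) {K : ℕ} (hK : 0 < K)
    (hX : ∀ i, X i ^ K ∈ Ideal.span (Set.range P)) (e : σ →₀ ℕ) :
    monomial e 1 ∈ Submodule.span (Algebra.adjoin R (Set.range P))
      ((fun e => monomial e (1 : R)) '' {e | ∀ i, e i < K}) := by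
  induction hD : e.degree using Nat.strong_induction_on generalizing e with
  | _ D ih =>
  by_cases he : ∀ i, e i < K
  · exact Submodule.subset_span ⟨e, he, rfl⟩
  obtain ⟨i, hi⟩ := not_forall.mp he
  rw [not_lt] at hi
  obtain ⟨g, hg, hXg⟩ := DirectSum.exists_homogeneous_sum_mul_of_mem_span_range
    (homogeneousSubmodule σ R) hP (by simpa using (isHomogeneous_X R i).pow K) (hX i)
  set e' := e - Finsupp.single i K
  have he' : e = e' + Finsupp.single i K :=
    (tsub_add_cancel_of_le (Finsupp.single_le_iff.mpr hi)).symm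
  have hmon : monomial e (1 : R) = ∑ j, P j * (monomial e' 1 * g j) := by
    rw [he', monomial_add_single, hXg, Finset.mul_sum]
    exact Finset.sum_congr rfl fun j _ => by ring
  rw [hmon]
  refine Submodule.sum_mem _ fun j _ => ?_
  have hPj : P j ∈ Algebra.adjoin R (Set.range P) := Algebra.subset_adjoin (Set.mem_range_self j)
  refine Submodule.smul_mem _ (⟨P j, hPj⟩ : Algebra.adjoin R (Set.range P)) ?_
  refine mem_of_forall_monomial_one_mem fun e'' he'' => ih _ ?_ e'' rfl
  have hdeg : e''.degree = e'.degree + (K - d j) := by_contra fun hne =>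
    mem_support_iff.mp he'' (((isHomogeneous_monomial 1 rfl).mul (hg j)).coeff_eq_zero hne)
  rw [hdeg, ← hD, he', map_add, Finsupp.degree_single]
  have hdj := hd j
  omega

theorem module_finite_adjoin_of_X_pow_mem [Finite σ] (hd : ∀ j, 1 ≤ d j)
    (hP : ∀ j, (P j).IsHomogeneous (d j)) {K : ℕ} (hK : 0 < K)
    (hX : ∀ i, X i ^ K ∈ Ideal.span (Set.range P)) :
    Module.Finite (Algebra.adjoin R (Set.range P)) (MvPolynomial σ R) := by
  classical
  refine ⟨Submodule.fg_def.mpr ⟨_, ?_, eq_top_iff.mpr fun p _ => mem_of_forall_monomial_one_mem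
    fun e _ => monomial_one_mem_span_adjoin_of_X_pow_mem hd hP hK hX e⟩⟩
  exact ((Set.finite_Iic (Finsupp.equivFunOnFinite.symm fun _ => K)).subset
    fun e he i => (he i).le).image _

end MvPolynomial

/-- If `P₁, …, Pₙ ∈ ℂ[X₁,…,Xₙ]` are homogeneous of positive degree and their only common
zero in `ℂⁿ` is the origin, then `ℂ[X₁,…,Xₙ]` is a finitely generated module over the
subalgebra `ℂ[P₁,…,Pₙ]`. -/
theorem finiteness_of_homogeneous_no_common_zero
    (n : ℕ) (P : Fin n → MvPolynomial (Fin n) ℂ) (d : Fin n → ℕ)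
    (hd : ∀ i, 1 ≤ d i)
    (hhom : ∀ i, MvPolynomial.IsHomogeneous (P i) (d i))
    (hz : ∀ a : Fin n → ℂ, (∀ i, MvPolynomial.eval a (P i) = 0) → a = 0) :
    Module.Finite (Algebra.adjoin ℂ (Set.range P)) (MvPolynomial (Fin n) ℂ) := by
  obtain ⟨K, hK⟩ := exists_X_pow_mem_span_of_forall_eval_eq_zero P hz
  refine module_finite_adjoin_of_X_pow_mem hd hhom K.succ_pos fun i => ?_
  rw [pow_succ]
  exact Ideal.mul_mem_right _ _ (hK i)
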